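/- For every Parikh vector P ∈ ℕ^σ (all entries positive) and every word w with Parikh vector P, the configuration graph G(P) contains a Hamiltonian path starting at w. -/

import Mathlib

/-- The Parikh vector of a word `w : Fin n → Fin σ`. -/
def parikh {n σ : ℕ} (w : Fin n → Fin σ) : Fin σ → ℕ :=
  fun a => (Finset.univ.filter fun i => w i = a).card

/-- Words of length `n` over alphabet `Fin σ` with Parikh vector `P`. -/
abbrev Words (n σ : ℕ) (P : Fin σ → ℕ) := {w : Fin n → Fin σ // parikh w = P}

/-- `u` is obtained from `w` by a single 2-swap. -/
def isSwap {n σ : ℕ} (w u : Fin n → Fin σ) : Prop :=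
  ∃ i j : Fin n, i ≠ j ∧ w i ≠ w j ∧ u = w ∘ Equiv.swap i j

/-- The configuration graph `G(P)`. -/
def configGraph (n σ : ℕ) (P : Fin σ → ℕ) : SimpleGraph (Words n σ P) :=
  SimpleGraph.fromRel fun w u => isSwap w.1 u.1

/-!
Induct on the length `n`. Appending a letter `a` embeds `G(P - eₐ)` onto the words of `G(P)` ending
in `a`, so by induction each such fibre has a Hamiltonian path from any of its words. From any word,
swapping an occurrence of a letter `b` into the last position is an edge into the fibre of `b`.
Tracing the fibres one after another, joined by such edges, gives a Hamiltonian path from any word.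
-/

namespace SimpleGraph

variable {V ι : Type*} {G : SimpleGraph V}

theorem exists_isPath_of_fibers (c : V → ι)
    (hfiber : ∀ u, ∃ v, ∃ p : G.Walk u v, p.IsPath ∧ ∀ x, x ∈ p.support ↔ c x = c u)
    (hcross : ∀ u x, c x ≠ c u → ∃ v, G.Adj u v ∧ c v = c x)
    [DecidableEq ι] (s : Finset ι) (hs : ∀ b ∈ s, ∃ x, c x = b) (u : V) (hu : c u ∉ s) :
    ∃ v, ∃ p : G.Walk u v, p.IsPath ∧ ∀ x, x ∈ p.support ↔ c x = c u ∨ c x ∈ s := by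
  induction s using Finset.induction_on generalizing u with
  | empty => simpa using hfiber u
  | insert b s hb ih =>
    obtain ⟨u₁, p, hp, hp_supp⟩ := hfiber u
    obtain ⟨x, rfl⟩ := hs b (Finset.mem_insert_self _ _)
    have hu₁ : c u₁ = c u := (hp_supp u₁).1 p.end_mem_support
    have hxu : c x ≠ c u := fun h => hu (h ▸ Finset.mem_insert_self _ _)
    obtain ⟨v, huv, hv⟩ := hcross u₁ x (hu₁ ▸ hxu)
    obtain ⟨w, q, hq, hq_supp⟩ :=
      ih (fun b hb => hs b (Finset.mem_insert_of_mem hb)) v (hv ▸ hb)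
    have h_supp : (p.append (q.cons huv)).support = p.support ++ q.support := by
      rw [Walk.support_append, Walk.support_cons, List.tail_cons]
    refine ⟨w, p.append (q.cons huv), ?_, fun y => ?_⟩
    · rw [Walk.isPath_def, h_supp, List.nodup_append]
      refine ⟨hp.support_nodup, hq.support_nodup, fun y hyp z hzq hyz => hu ?_⟩
      rw [← (hp_supp y).1 hyp, hyz, Finset.mem_insert, ← hv]
      exact (hq_supp z).1 hzq
    · rw [h_supp, List.mem_append, hp_supp, hq_supp, hv, Finset.mem_insert]

theorem exists_isHamiltonian_of_fibers [Finite V] [DecidableEq V] (c : V → ι)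
    (hfiber : ∀ u, ∃ v, ∃ p : G.Walk u v, p.IsPath ∧ ∀ x, x ∈ p.support ↔ c x = c u)
    (hcross : ∀ u x, c x ≠ c u → ∃ v, G.Adj u v ∧ c v = c x) (u : V) :
    ∃ v, ∃ p : G.Walk u v, p.IsHamiltonian := by
  classical
  have := Fintype.ofFinite V
  obtain ⟨v, p, hp, hp_supp⟩ := exists_isPath_of_fibers c hfiber hcross
    ((Finset.univ.image c).erase (c u)) (by simp) u (by simp)
  refine ⟨v, p, hp.isHamiltonian_of_mem fun x => (hp_supp x).2 ?_⟩
  simpa using eq_or_ne (c x) (c u)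

end SimpleGraph

section ConfigGraph

variable {n σ : ℕ} {P : Fin σ → ℕ}

lemma parikh_comp_perm (w : Fin n → Fin σ) (e : Equiv.Perm (Fin n)) :
    parikh (w ∘ e) = parikh w :=
  funext fun _ => Finset.card_equiv e (by simp)

lemma parikh_snoc (w : Fin n → Fin σ) (a : Fin σ) :
    parikh (Fin.snoc w a : Fin (n + 1) → Fin σ) = parikh w + Pi.single a 1 := by
  funext b
  simp only [parikh, Finset.card_filter, Fin.sum_univ_castSucc, Fin.snoc_castSucc, Fin.snoc_last,
    Pi.add_apply, Pi.single_apply, eq_comm]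

lemma one_le_parikh_apply (w : Fin n → Fin σ) (i : Fin n) : 1 ≤ parikh w (w i) :=
  Finset.card_pos.2 ⟨i, by simp⟩

lemma exists_apply_eq_of_parikh_eq {w w' : Fin n → Fin σ} (h : parikh w = parikh w') (j : Fin n) :
    ∃ i, w i = w' j := by
  have := h ▸ one_le_parikh_apply w' j
  obtain ⟨i, hi⟩ := Finset.card_pos.1 this
  exact ⟨i, (Finset.mem_filter.1 hi).2⟩

lemma isSwap.ne {w u : Fin n → Fin σ} (h : isSwap w u) : w ≠ u := by
  obtain ⟨i, j, -, hw, rfl⟩ := h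
  intro h
  exact hw (by simpa using (congrFun h j).symm)

lemma configGraph_adj_of_isSwap {u v : Words n σ P} (h : isSwap u.1 v.1) :
    (configGraph n σ P).Adj u v :=
  ⟨fun huv => h.ne (congrArg Subtype.val huv), Or.inl h⟩

lemma isSwap_snoc {w u : Fin n → Fin σ} (h : isSwap w u) (a : Fin σ) :
    isSwap (Fin.snoc w a : Fin (n + 1) → Fin σ) (Fin.snoc u a) := by
  obtain ⟨i, j, hij, hw, rfl⟩ := h
  refine ⟨i.castSucc, j.castSucc, by simpa using hij, by simpa using hw, funext fun k => ?_⟩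
  induction k using Fin.lastCases with
  | last => simp [Equiv.swap_apply_of_ne_of_ne (Fin.castSucc_lt_last i).ne'
      (Fin.castSucc_lt_last j).ne']
  | cast k => simp [(Fin.castSucc_injective n).swap_apply]

def snocHom {a : Fin σ} (ha : 1 ≤ P a) :
    configGraph n σ (P - Pi.single a 1) →g configGraph (n + 1) σ P where
  toFun w := ⟨Fin.snoc w.1 a, by
    rw [parikh_snoc, w.2]
    funext b
    rcases eq_or_ne b a with rfl | hb <;> simp [*]⟩
  map_rel' {w u} h := by
    rcases h.2 with h' | h'
    · exact configGraph_adj_of_isSwap (isSwap_snoc h' a)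
    · exact (configGraph_adj_of_isSwap (isSwap_snoc h' a)).symm

lemma snocHom_injective {a : Fin σ} (ha : 1 ≤ P a) :
    Function.Injective (snocHom (n := n) ha) := fun w u h => by
  have := congrArg (fun x => Fin.init x.1) h
  exact Subtype.ext (by simpa [snocHom] using this)

lemma mem_range_snocHom_iff {a : Fin σ} (ha : 1 ≤ P a) (x : Words (n + 1) σ P) :
    x ∈ Set.range (snocHom ha) ↔ x.1 (Fin.last n) = a := by
  refine ⟨?_, fun hx => ?_⟩
  · rintro ⟨w, rfl⟩
    simp [snocHom]
  · have h_init : parikh (Fin.init x.1) = P - Pi.single a 1 := by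
      have hP := x.2
      rw [← Fin.snoc_init_self x.1, parikh_snoc, hx] at hP
      exact eq_tsub_of_add_eq hP
    refine ⟨⟨Fin.init x.1, h_init⟩, Subtype.ext ?_⟩
    simp [snocHom, ← hx]

lemma exists_isPath_support_iff_last_eq
    (ih : ∀ (Q : Fin σ → ℕ) (w : Words n σ Q),
      ∃ v, ∃ p : (configGraph n σ Q).Walk w v, p.IsHamiltonian)
    (u : Words (n + 1) σ P) :
    ∃ v, ∃ p : (configGraph (n + 1) σ P).Walk u v,
      p.IsPath ∧ ∀ x, x ∈ p.support ↔ x.1 (Fin.last n) = u.1 (Fin.last n) := by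
  obtain ⟨a, hu⟩ : ∃ a, u.1 (Fin.last n) = a := ⟨_, rfl⟩
  have ha : 1 ≤ P a := by
    simpa [hu, u.2] using one_le_parikh_apply u.1 (Fin.last n)
  obtain ⟨w, rfl⟩ := (mem_range_snocHom_iff ha u).2 hu
  obtain ⟨v, p, hp⟩ := ih _ w
  refine ⟨_, p.map (snocHom ha), hp.isPath.map (snocHom_injective ha), fun x => ?_⟩
  rw [SimpleGraph.Walk.support_map, List.mem_map, hu, ← mem_range_snocHom_iff ha]
  simp [hp.mem_support]

lemma exists_adj_last_eq (u x : Words (n + 1) σ P)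
    (hx : x.1 (Fin.last n) ≠ u.1 (Fin.last n)) :
    ∃ v, (configGraph (n + 1) σ P).Adj u v ∧ v.1 (Fin.last n) = x.1 (Fin.last n) := by
  obtain ⟨i, hi⟩ := exists_apply_eq_of_parikh_eq (u.2.trans x.2.symm) (Fin.last n)
  have hi_last : i ≠ Fin.last n := by rintro rfl; exact hx hi.symm
  refine ⟨⟨u.1 ∘ Equiv.swap i (Fin.last n), by rw [parikh_comp_perm, u.2]⟩,
    configGraph_adj_of_isSwap ⟨i, Fin.last n, hi_last, hi ▸ hx, rfl⟩, ?_⟩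
  simp [hi]

end ConfigGraph

theorem stmt17_general (n σ : ℕ) (P : Fin σ → ℕ)
    (w : Words n σ P) :
    ∃ (v : Words n σ P) (p : (configGraph n σ P).Walk w v), p.IsHamiltonian := by
  induction n generalizing P with
  | zero => exact ⟨w, .nil, .of_subsingleton⟩
  | succ n ih =>
    exact SimpleGraph.exists_isHamiltonian_of_fibers (fun x => x.1 (Fin.last n))
      (exists_isPath_support_iff_last_eq ih) exists_adj_last_eq w

theorem stmt17 (n σ : ℕ) (P : Fin σ → ℕ) (hP : ∀ i, 1 ≤ P i) (hn : ∑ i, P i = n)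
    (w : Words n σ P) :
    ∃ (v : Words n σ P) (p : (configGraph n σ P).Walk w v), p.IsHamiltonian :=
  stmt17_general n σ P w
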